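/- Let γ > −2 and G(x) = (1/(2√(2π))) ∫_ℝ e^{ixξ}/(1 + ξ² + γ|ξ|) dξ. Then there exist constants C₁, C₂, θ > 0 (depending on γ) such that |G(x)| ≤ C₁|γ|/x² + C₂ e^{−θ|x|/2} for all |x| ≥ 1. In particular G ∈ L¹(ℝ) and x²G(x) is bounded. -/

import Mathlib

open MeasureTheory Real Set Filter Topology FourierTransform

/-- The Green function `G`, inverse Fourier transform of `1/(1+ξ²+γ|ξ|)`. -/
noncomputable def GreenG (γ : ℝ) (x : ℝ) : ℂ :=
  (1 / (2 * Real.sqrt (2 * Real.pi)))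
    * ∫ ξ : ℝ, Complex.exp (Complex.I * x * ξ) / Complex.ofReal (1 + ξ ^ 2 + γ * |ξ|)

noncomputable section AuxG

def uu (γ ξ : ℝ) : ℝ := 1 + ξ ^ 2 + γ * ξ
def pp (γ ξ : ℝ) : ℝ := (uu γ ξ)⁻¹
def pp' (γ ξ : ℝ) : ℝ := -(2 * ξ + γ) / (uu γ ξ) ^ 2
def pp'' (γ ξ : ℝ) : ℝ := -2 / (uu γ ξ) ^ 2 + 2 * (2 * ξ + γ) ^ 2 / (uu γ ξ) ^ 3
def cc (γ : ℝ) : ℝ := min 1 (1 + γ / 2)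

variable {γ : ℝ}

lemma cc_pos (hγ : -2 < γ) : 0 < cc γ := by
  have : 0 < 1 + γ / 2 := by linarith
  simp [cc, this]

lemma cc_le_one : cc γ ≤ 1 := min_le_left _ _

lemma uu_lower (hγ : -2 < γ) {ξ : ℝ} (hξ : 0 ≤ ξ) : cc γ * (1 + ξ ^ 2) ≤ uu γ ξ := by
  have h2 : cc γ ≤ 1 + γ / 2 := min_le_right _ _
  have h1 : cc γ ≤ 1 := cc_le_one
  unfold uu
  nlinarith [sq_nonneg (1 - ξ)]

lemma uu_pos (hγ : -2 < γ) {ξ : ℝ} (hξ : 0 ≤ ξ) : 0 < uu γ ξ :=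
  lt_of_lt_of_le (mul_pos (cc_pos hγ) (by positivity)) (uu_lower hγ hξ)

lemma abs_lin_le (hγ : -2 < γ) {ξ : ℝ} (hξ : 0 ≤ ξ) :
    |2 * ξ + γ| ≤ (1 + |γ|) * (1 + ξ ^ 2) := by
  have h1 : |2 * ξ + γ| ≤ |2 * ξ| + |γ| := abs_add_le _ _
  have h2 : |2 * ξ| = 2 * ξ := abs_of_nonneg (by linarith)
  have h3 : 2 * ξ ≤ 1 + ξ ^ 2 := by nlinarith [sq_nonneg (1 - ξ)]
  nlinarith [abs_nonneg γ, sq_nonneg ξ]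

lemma pp_bound (hγ : -2 < γ) {ξ : ℝ} (hξ : 0 ≤ ξ) :
    pp γ ξ ≤ (cc γ)⁻¹ * (1 + ξ ^ 2)⁻¹ := by
  have hc := cc_pos hγ
  have h := uu_lower hγ hξ
  calc (uu γ ξ)⁻¹ ≤ (cc γ * (1 + ξ ^ 2))⁻¹ :=
        inv_anti₀ (by positivity) h
    _ = (cc γ)⁻¹ * (1 + ξ ^ 2)⁻¹ := by rw [mul_inv]

lemma sq_uu_lower (hγ : -2 < γ) {ξ : ℝ} (hξ : 0 ≤ ξ) :
    (cc γ) ^ 2 * (1 + ξ ^ 2) ^ 2 ≤ (uu γ ξ) ^ 2 := by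
  have h := uu_lower hγ hξ
  have hc := cc_pos hγ
  have h0 : 0 ≤ cc γ * (1 + ξ ^ 2) := by positivity
  calc (cc γ) ^ 2 * (1 + ξ ^ 2) ^ 2 = (cc γ * (1 + ξ ^ 2)) ^ 2 := by ring
    _ ≤ (uu γ ξ) ^ 2 := pow_le_pow_left₀ h0 h 2

lemma cube_uu_lower (hγ : -2 < γ) {ξ : ℝ} (hξ : 0 ≤ ξ) :
    (cc γ) ^ 3 * (1 + ξ ^ 2) ^ 3 ≤ (uu γ ξ) ^ 3 := by
  have h := uu_lower hγ hξ
  have hc := cc_pos hγ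
  have h0 : 0 ≤ cc γ * (1 + ξ ^ 2) := by positivity
  calc (cc γ) ^ 3 * (1 + ξ ^ 2) ^ 3 = (cc γ * (1 + ξ ^ 2)) ^ 3 := by ring
    _ ≤ (uu γ ξ) ^ 3 := pow_le_pow_left₀ h0 h 3

lemma pp'_bound (hγ : -2 < γ) {ξ : ℝ} (hξ : 0 ≤ ξ) :
    |pp' γ ξ| ≤ (1 + |γ|) / (cc γ) ^ 2 * (1 + ξ ^ 2)⁻¹ := by
  have hu := uu_pos hγ hξ
  have hc := cc_pos hγ
  have habs : |pp' γ ξ| = |2 * ξ + γ| / (uu γ ξ) ^ 2 := by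
    rw [pp', abs_div, abs_neg, abs_of_pos (pow_pos hu 2)]
  rw [habs]
  have hrhs : (1 + |γ|) / (cc γ) ^ 2 * (1 + ξ ^ 2)⁻¹
      = (1 + |γ|) / ((cc γ) ^ 2 * (1 + ξ ^ 2)) := by
    field_simp
  rw [hrhs, div_le_div_iff₀ (pow_pos hu 2) (by positivity)]
  have h1 := abs_lin_le hγ hξ
  have h2 := sq_uu_lower hγ hξ
  have h3 : 0 ≤ |2 * ξ + γ| := abs_nonneg _
  have h4 : (1 : ℝ) ≤ 1 + ξ ^ 2 := by nlinarith [sq_nonneg ξ]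
  nlinarith [mul_le_mul h1 h2 (by positivity) (by positivity)]

lemma pp''_bound (hγ : -2 < γ) {ξ : ℝ} (hξ : 0 ≤ ξ) :
    |pp'' γ ξ| ≤ (2 / (cc γ) ^ 2 + 2 * (1 + |γ|) ^ 2 / (cc γ) ^ 3) * (1 + ξ ^ 2)⁻¹ := by
  have hu := uu_pos hγ hξ
  have hc := cc_pos hγ
  have h4 : (1 : ℝ) ≤ 1 + ξ ^ 2 := by nlinarith [sq_nonneg ξ]
  have tri : |pp'' γ ξ| ≤ 2 / (uu γ ξ) ^ 2 + 2 * (2 * ξ + γ) ^ 2 / (uu γ ξ) ^ 3 := by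
    rw [pp'']
    refine (abs_add_le _ _).trans ?_
    have e1 : |-2 / (uu γ ξ) ^ 2| = 2 / (uu γ ξ) ^ 2 := by
      rw [abs_div, abs_neg, abs_of_pos (pow_pos hu 2)]; norm_num
    have e2 : |2 * (2 * ξ + γ) ^ 2 / (uu γ ξ) ^ 3| = 2 * (2 * ξ + γ) ^ 2 / (uu γ ξ) ^ 3 := by
      rw [abs_of_nonneg (by positivity)]
    rw [e1, e2]
  refine tri.trans ?_
  have t1 : 2 / (uu γ ξ) ^ 2 ≤ 2 / (cc γ) ^ 2 * (1 + ξ ^ 2)⁻¹ := by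
    have hrhs : 2 / (cc γ) ^ 2 * (1 + ξ ^ 2)⁻¹ = 2 / ((cc γ) ^ 2 * (1 + ξ ^ 2)) := by
      field_simp
    rw [hrhs, div_le_div_iff₀ (pow_pos hu 2) (by positivity)]
    have h2 := sq_uu_lower hγ hξ
    nlinarith [sq_nonneg ξ, mul_pos (mul_pos (mul_pos hc hc) (by positivity : (0:ℝ) < 1 + ξ ^ 2)) (by positivity : (0:ℝ) < 1 + ξ ^ 2)]
  have t2 : 2 * (2 * ξ + γ) ^ 2 / (uu γ ξ) ^ 3
      ≤ 2 * (1 + |γ|) ^ 2 / (cc γ) ^ 3 * (1 + ξ ^ 2)⁻¹ := by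
    have hrhs : 2 * (1 + |γ|) ^ 2 / (cc γ) ^ 3 * (1 + ξ ^ 2)⁻¹
        = 2 * (1 + |γ|) ^ 2 / ((cc γ) ^ 3 * (1 + ξ ^ 2)) := by field_simp
    rw [hrhs, div_le_div_iff₀ (pow_pos hu 3) (by positivity)]
    have h1 := abs_lin_le hγ hξ
    have h1' : (2 * ξ + γ) ^ 2 ≤ (1 + |γ|) ^ 2 * (1 + ξ ^ 2) ^ 2 := by
      have := sq_abs (2 * ξ + γ)
      nlinarith [abs_nonneg (2 * ξ + γ), abs_nonneg γ, sq_nonneg ξ]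
    have h3 := cube_uu_lower hγ hξ
    have key : (2 * ξ + γ) ^ 2 * ((cc γ) ^ 3 * (1 + ξ ^ 2))
        ≤ (1 + |γ|) ^ 2 * (uu γ ξ) ^ 3 := by
      calc (2 * ξ + γ) ^ 2 * ((cc γ) ^ 3 * (1 + ξ ^ 2))
          ≤ (1 + |γ|) ^ 2 * (1 + ξ ^ 2) ^ 2 * ((cc γ) ^ 3 * (1 + ξ ^ 2)) := by
            have : (0:ℝ) ≤ (cc γ) ^ 3 * (1 + ξ ^ 2) := by positivity
            exact mul_le_mul_of_nonneg_right h1' this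
        _ = (1 + |γ|) ^ 2 * ((cc γ) ^ 3 * (1 + ξ ^ 2) ^ 3) := by ring
        _ ≤ (1 + |γ|) ^ 2 * (uu γ ξ) ^ 3 := by
            have : (0:ℝ) ≤ (1 + |γ|) ^ 2 := by positivity
            exact mul_le_mul_of_nonneg_left h3 this
    nlinarith [key]
  calc 2 / (uu γ ξ) ^ 2 + 2 * (2 * ξ + γ) ^ 2 / (uu γ ξ) ^ 3
      ≤ 2 / (cc γ) ^ 2 * (1 + ξ ^ 2)⁻¹ + 2 * (1 + |γ|) ^ 2 / (cc γ) ^ 3 * (1 + ξ ^ 2)⁻¹ :=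
        add_le_add t1 t2
    _ = (2 / (cc γ) ^ 2 + 2 * (1 + |γ|) ^ 2 / (cc γ) ^ 3) * (1 + ξ ^ 2)⁻¹ := by ring

lemma hasDerivAt_uu (ξ : ℝ) : HasDerivAt (uu γ) (2 * ξ + γ) ξ := by
  unfold uu
  have h1 : HasDerivAt (fun ξ : ℝ => 1 + ξ ^ 2) (2 * ξ) ξ := by
    simpa using (hasDerivAt_pow 2 ξ).const_add 1
  have h2 : HasDerivAt (fun ξ : ℝ => γ * ξ) γ ξ := by
    simpa using (hasDerivAt_id ξ).const_mul γ
  exact h1.add h2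

lemma hasDerivAt_pp (hγ : -2 < γ) {ξ : ℝ} (hξ : 0 ≤ ξ) :
    HasDerivAt (pp γ) (pp' γ ξ) ξ := by
  have hu := (uu_pos hγ hξ).ne'
  exact ((hasDerivAt_uu ξ).inv hu).congr_deriv (by unfold pp'; ring)

lemma hasDerivAt_pp' (hγ : -2 < γ) {ξ : ℝ} (hξ : 0 ≤ ξ) :
    HasDerivAt (pp' γ) (pp'' γ ξ) ξ := by
  have hu := uu_pos hγ hξ
  have hnum : HasDerivAt (fun ξ : ℝ => -(2 * ξ + γ)) (-2) ξ := by
    have : HasDerivAt (fun ξ : ℝ => 2 * ξ + γ) 2 ξ := by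
      simpa using ((hasDerivAt_id ξ).const_mul 2).add_const γ
    exact this.neg
  have hden : HasDerivAt (fun ξ : ℝ => (uu γ ξ) ^ 2) (2 * (uu γ ξ) ^ 1 * (2 * ξ + γ)) ξ :=
    (hasDerivAt_uu ξ).pow 2
  have h := hnum.div hden (by positivity)
  refine h.congr_deriv ?_
  rw [pp'']
  field_simp
  ring

def JJ (γ x : ℝ) : ℝ := ∫ ξ in Ioi (0 : ℝ), Real.cos (x * ξ) * pp γ ξ

lemma integrable_of_bound {f : ℝ → ℝ} (A : ℝ)
    (hm : AEStronglyMeasurable f (volume.restrict (Ioi 0)))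
    (hb : ∀ ξ : ℝ, 0 < ξ → |f ξ| ≤ A * (1 + ξ ^ 2)⁻¹) :
    IntegrableOn f (Ioi 0) := by
  refine Integrable.mono' ((integrable_inv_one_add_sq.const_mul A).integrableOn) hm ?_
  filter_upwards [ae_restrict_mem measurableSet_Ioi] with ξ hξ
  simpa using hb ξ hξ

lemma measurable_pp : Measurable (pp γ) := by
  apply Measurable.inv; fun_prop [uu]

lemma measurable_pp' : Measurable (pp' γ) := by unfold pp'; fun_prop [uu]

lemma measurable_pp'' : Measurable (pp'' γ) := by unfold pp''; fun_prop [uu]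

lemma integrableOn_trig_mul {g q : ℝ → ℝ} (hg : Measurable g) (hgb : ∀ t, |g t| ≤ 1)
    (hq : Measurable q) (A : ℝ) (hqb : ∀ ξ : ℝ, 0 < ξ → |q ξ| ≤ A * (1 + ξ ^ 2)⁻¹) :
    IntegrableOn (fun ξ => g ξ * q ξ) (Ioi 0) := by
  refine integrable_of_bound A ((hg.mul hq).aestronglyMeasurable) (fun ξ hξ => ?_)
  calc |g ξ * q ξ| = |g ξ| * |q ξ| := abs_mul _ _
    _ ≤ 1 * |q ξ| := by
        exact mul_le_mul_of_nonneg_right (hgb ξ) (abs_nonneg _)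
    _ = |q ξ| := one_mul _
    _ ≤ A * (1 + ξ ^ 2)⁻¹ := hqb ξ hξ

lemma pp_nonneg (hγ : -2 < γ) {ξ : ℝ} (hξ : 0 ≤ ξ) : 0 ≤ pp γ ξ :=
  inv_nonneg.2 (uu_pos hγ hξ).le

lemma pp_abs_bound (hγ : -2 < γ) {ξ : ℝ} (hξ : 0 ≤ ξ) :
    |pp γ ξ| ≤ (cc γ)⁻¹ * (1 + ξ ^ 2)⁻¹ := by
  rw [abs_of_nonneg (pp_nonneg hγ hξ)]; exact pp_bound hγ hξ

/-- first integration by parts -/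
lemma IBP1 (hγ : -2 < γ) {x : ℝ} (hx : x ≠ 0) :
    ∫ ξ in Ioi (0:ℝ), Real.cos (x * ξ) * pp γ ξ
      = -(1 / x) * ∫ ξ in Ioi (0:ℝ), Real.sin (x * ξ) * pp' γ ξ := by
  set F : ℝ → ℝ := fun ξ => Real.sin (x * ξ) * pp γ ξ / x with hF
  have int1 : IntegrableOn (fun ξ => Real.cos (x * ξ) * pp γ ξ) (Ioi 0) :=
    integrableOn_trig_mul (by fun_prop) (fun t => abs_cos_le_one _) measurable_pp
      ((cc γ)⁻¹) (fun ξ hξ => pp_abs_bound hγ hξ.le)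
  have int2 : IntegrableOn (fun ξ => Real.sin (x * ξ) * pp' γ ξ) (Ioi 0) :=
    integrableOn_trig_mul (by fun_prop) (fun t => abs_sin_le_one _) measurable_pp'
      ((1 + |γ|) / (cc γ) ^ 2) (fun ξ hξ => pp'_bound hγ hξ.le)
  have hder : ∀ ξ ∈ Ioi (0:ℝ), HasDerivAt F
      (Real.cos (x * ξ) * pp γ ξ + Real.sin (x * ξ) * pp' γ ξ / x) ξ := by
    intro ξ hξ
    have hsin : HasDerivAt (fun ξ : ℝ => Real.sin (x * ξ)) (Real.cos (x * ξ) * x) ξ := by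
      simpa using ((hasDerivAt_id ξ).const_mul x).sin
    have h := (hsin.mul (hasDerivAt_pp hγ (le_of_lt hξ))).div_const x
    refine h.congr_deriv ?_
    field_simp
  have hcont : ContinuousWithinAt F (Ici 0) 0 := by
    have hsin : HasDerivAt (fun ξ : ℝ => Real.sin (x * ξ)) (Real.cos (x * 0) * x) 0 := by
      simpa using ((hasDerivAt_id 0).const_mul x).sin
    exact ((hsin.mul (hasDerivAt_pp hγ le_rfl)).div_const x).continuousAt.continuousWithinAt
  have htend : Tendsto F atTop (𝓝 0) := by
    have hb : Tendsto (fun ξ : ℝ => (cc γ)⁻¹ / |x| * (1 + ξ ^ 2)⁻¹) atTop (𝓝 0) := by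
      have h0 : Tendsto (fun ξ : ℝ => (1 + ξ ^ 2)⁻¹) atTop (𝓝 0) :=
        tendsto_inv_atTop_zero.comp
          (tendsto_atTop_add_const_left _ 1 (tendsto_pow_atTop two_ne_zero))
      simpa using h0.const_mul ((cc γ)⁻¹ / |x|)
    refine squeeze_zero_norm' ?_ hb
    filter_upwards [eventually_ge_atTop (0:ℝ)] with ξ hξ
    have h1 : ‖F ξ‖ = |Real.sin (x * ξ)| * |pp γ ξ| / |x| := by
      simp only [hF, Real.norm_eq_abs, abs_div, abs_mul]
    have h2 : |Real.sin (x * ξ)| * |pp γ ξ| ≤ (cc γ)⁻¹ * (1 + ξ ^ 2)⁻¹ := by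
      calc |Real.sin (x * ξ)| * |pp γ ξ| ≤ 1 * |pp γ ξ| :=
            mul_le_mul_of_nonneg_right (abs_sin_le_one _) (abs_nonneg _)
        _ = |pp γ ξ| := one_mul _
        _ ≤ (cc γ)⁻¹ * (1 + ξ ^ 2)⁻¹ := pp_abs_bound hγ hξ
    have heq : (cc γ)⁻¹ / |x| * (1 + ξ ^ 2)⁻¹ = (cc γ)⁻¹ * (1 + ξ ^ 2)⁻¹ / |x| := by
      ring
    rw [h1, heq, div_eq_mul_inv, div_eq_mul_inv]
    exact mul_le_mul_of_nonneg_right h2 (inv_nonneg.2 (abs_nonneg x))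
  have hint : IntegrableOn
      (fun ξ => Real.cos (x * ξ) * pp γ ξ + Real.sin (x * ξ) * pp' γ ξ / x) (Ioi 0) := by
    exact int1.add (int2.div_const x)
  have hFTC := integral_Ioi_of_hasDerivAt_of_tendsto hcont hder hint htend
  have hF0 : F 0 = 0 := by simp [hF]
  rw [hF0, sub_zero] at hFTC
  have hsplit : (∫ ξ in Ioi (0:ℝ),
      (Real.cos (x * ξ) * pp γ ξ + Real.sin (x * ξ) * pp' γ ξ / x))
      = (∫ ξ in Ioi (0:ℝ), Real.cos (x * ξ) * pp γ ξ)
        + (∫ ξ in Ioi (0:ℝ), Real.sin (x * ξ) * pp' γ ξ) / x := by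
    rw [integral_add int1 (int2.div_const x), integral_div]
  rw [hsplit] at hFTC
  have : (∫ ξ in Ioi (0:ℝ), Real.cos (x * ξ) * pp γ ξ)
      = -((∫ ξ in Ioi (0:ℝ), Real.sin (x * ξ) * pp' γ ξ) / x) := by linarith
  rw [this]; ring

/-- second integration by parts -/
lemma IBP2 (hγ : -2 < γ) {x : ℝ} (hx : x ≠ 0) :
    ∫ ξ in Ioi (0:ℝ), Real.sin (x * ξ) * pp' γ ξ
      = -γ / x + (1 / x) * ∫ ξ in Ioi (0:ℝ), Real.cos (x * ξ) * pp'' γ ξ := by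
  set H : ℝ → ℝ := fun ξ => -(Real.cos (x * ξ) * pp' γ ξ / x) with hH
  have int2 : IntegrableOn (fun ξ => Real.sin (x * ξ) * pp' γ ξ) (Ioi 0) :=
    integrableOn_trig_mul (by fun_prop) (fun t => abs_sin_le_one _) measurable_pp'
      ((1 + |γ|) / (cc γ) ^ 2) (fun ξ hξ => pp'_bound hγ hξ.le)
  have int3 : IntegrableOn (fun ξ => Real.cos (x * ξ) * pp'' γ ξ) (Ioi 0) :=
    integrableOn_trig_mul (by fun_prop) (fun t => abs_cos_le_one _) measurable_pp''
      (2 / (cc γ) ^ 2 + 2 * (1 + |γ|) ^ 2 / (cc γ) ^ 3) (fun ξ hξ => pp''_bound hγ hξ.le)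
  have hder : ∀ ξ ∈ Ioi (0:ℝ), HasDerivAt H
      (Real.sin (x * ξ) * pp' γ ξ + -(Real.cos (x * ξ) * pp'' γ ξ / x)) ξ := by
    intro ξ hξ
    have hcos : HasDerivAt (fun ξ : ℝ => Real.cos (x * ξ)) (-Real.sin (x * ξ) * x) ξ := by
      simpa using ((hasDerivAt_id ξ).const_mul x).cos
    have h := (((hcos.mul (hasDerivAt_pp' hγ (le_of_lt hξ)))).div_const x).neg
    refine h.congr_deriv ?_
    field_simp
    ring
  have hcont : ContinuousWithinAt H (Ici 0) 0 := by
    have hcos : HasDerivAt (fun ξ : ℝ => Real.cos (x * ξ)) (-Real.sin (x * 0) * x) 0 := by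
      simpa using ((hasDerivAt_id 0).const_mul x).cos
    exact (((hcos.mul (hasDerivAt_pp' hγ le_rfl)).div_const x).neg).continuousAt.continuousWithinAt
  have htend : Tendsto H atTop (𝓝 0) := by
    have hb : Tendsto (fun ξ : ℝ => (1 + |γ|) / (cc γ) ^ 2 / |x| * (1 + ξ ^ 2)⁻¹)
        atTop (𝓝 0) := by
      have h0 : Tendsto (fun ξ : ℝ => (1 + ξ ^ 2)⁻¹) atTop (𝓝 0) :=
        tendsto_inv_atTop_zero.comp
          (tendsto_atTop_add_const_left _ 1 (tendsto_pow_atTop two_ne_zero))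
      simpa using h0.const_mul ((1 + |γ|) / (cc γ) ^ 2 / |x|)
    refine squeeze_zero_norm' ?_ hb
    filter_upwards [eventually_ge_atTop (0:ℝ)] with ξ hξ
    have h1 : ‖H ξ‖ = |Real.cos (x * ξ)| * |pp' γ ξ| / |x| := by
      simp only [hH, Real.norm_eq_abs, abs_neg, abs_div, abs_mul]
    have h2 : |Real.cos (x * ξ)| * |pp' γ ξ| ≤ (1 + |γ|) / (cc γ) ^ 2 * (1 + ξ ^ 2)⁻¹ := by
      calc |Real.cos (x * ξ)| * |pp' γ ξ| ≤ 1 * |pp' γ ξ| :=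
            mul_le_mul_of_nonneg_right (abs_cos_le_one _) (abs_nonneg _)
        _ = |pp' γ ξ| := one_mul _
        _ ≤ (1 + |γ|) / (cc γ) ^ 2 * (1 + ξ ^ 2)⁻¹ := pp'_bound hγ hξ
    have heq : (1 + |γ|) / (cc γ) ^ 2 / |x| * (1 + ξ ^ 2)⁻¹
        = (1 + |γ|) / (cc γ) ^ 2 * (1 + ξ ^ 2)⁻¹ / |x| := by ring
    rw [h1, heq, div_eq_mul_inv, div_eq_mul_inv]
    exact mul_le_mul_of_nonneg_right h2 (inv_nonneg.2 (abs_nonneg x))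
  have int3' : IntegrableOn (fun ξ => -(Real.cos (x * ξ) * pp'' γ ξ / x)) (Ioi 0) :=
    (int3.div_const x).neg
  have hint : IntegrableOn
      (fun ξ => Real.sin (x * ξ) * pp' γ ξ + -(Real.cos (x * ξ) * pp'' γ ξ / x)) (Ioi 0) :=
    int2.add int3'
  have hFTC := integral_Ioi_of_hasDerivAt_of_tendsto hcont hder hint htend
  have hH0 : H 0 = γ / x := by
    have h2 : pp' γ 0 = -γ := by simp [pp', uu]
    show -(Real.cos (x * 0) * pp' γ 0 / x) = γ / x
    rw [h2]; simp [neg_div]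
  rw [hH0] at hFTC
  have hsplit : (∫ ξ in Ioi (0:ℝ),
      (Real.sin (x * ξ) * pp' γ ξ + -(Real.cos (x * ξ) * pp'' γ ξ / x)))
      = (∫ ξ in Ioi (0:ℝ), Real.sin (x * ξ) * pp' γ ξ)
        - (∫ ξ in Ioi (0:ℝ), Real.cos (x * ξ) * pp'' γ ξ) / x := by
    rw [integral_add int2 int3', integral_neg, integral_div]
    ring
  rw [hsplit] at hFTC
  have h9 : (∫ ξ in Ioi (0:ℝ), Real.sin (x * ξ) * pp' γ ξ)
      = -(γ / x) + (∫ ξ in Ioi (0:ℝ), Real.cos (x * ξ) * pp'' γ ξ) / x := by linarith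
  rw [h9, neg_div]; ring

/-- the baseline integral -/
def I0 : ℝ := ∫ ξ in Ioi (0:ℝ), (1 + ξ ^ 2)⁻¹

lemma I0_nonneg : 0 ≤ I0 :=
  setIntegral_nonneg measurableSet_Ioi (fun ξ _ => by positivity)

lemma norm_int_le (hγ : -2 < γ) {g q : ℝ → ℝ} (hg : Measurable g) (hgb : ∀ t, |g t| ≤ 1)
    (hq : Measurable q) (A : ℝ) (hA : 0 ≤ A)
    (hqb : ∀ ξ : ℝ, 0 < ξ → |q ξ| ≤ A * (1 + ξ ^ 2)⁻¹) :
    |∫ ξ in Ioi (0:ℝ), g ξ * q ξ| ≤ A * I0 := by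
  have hint : IntegrableOn (fun ξ => g ξ * q ξ) (Ioi 0) :=
    integrableOn_trig_mul hg hgb hq A hqb
  have h1 : |∫ ξ in Ioi (0:ℝ), g ξ * q ξ| ≤ ∫ ξ in Ioi (0:ℝ), |g ξ * q ξ| := by
    have := norm_integral_le_integral_norm (μ := volume.restrict (Ioi 0))
      (fun ξ => g ξ * q ξ)
    simpa only [Real.norm_eq_abs] using this
  refine h1.trans ?_
  have h2 : (∫ ξ in Ioi (0:ℝ), |g ξ * q ξ|)
      ≤ ∫ ξ in Ioi (0:ℝ), A * (1 + ξ ^ 2)⁻¹ := by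
    refine setIntegral_mono_on hint.abs
      ((integrable_inv_one_add_sq.const_mul A).integrableOn) measurableSet_Ioi
      (fun ξ hξ => ?_)
    calc |g ξ * q ξ| = |g ξ| * |q ξ| := abs_mul _ _
      _ ≤ 1 * |q ξ| := mul_le_mul_of_nonneg_right (hgb ξ) (abs_nonneg _)
      _ = |q ξ| := one_mul _
      _ ≤ A * (1 + ξ ^ 2)⁻¹ := hqb ξ hξ
  refine h2.trans ?_
  rw [integral_const_mul]
  rfl

lemma JJ_decay (hγ : -2 < γ) :
    ∃ K : ℝ, 0 < K ∧ ∀ x : ℝ, x ≠ 0 → |JJ γ x| ≤ (|γ| + K) / x ^ 2 := by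
  set A : ℝ := 2 / (cc γ) ^ 2 + 2 * (1 + |γ|) ^ 2 / (cc γ) ^ 3 with hA
  have hc := cc_pos hγ
  have hA0 : 0 ≤ A := by positivity
  refine ⟨A * I0 + 1, by linarith [mul_nonneg hA0 I0_nonneg], fun x hx => ?_⟩
  have hT : |∫ ξ in Ioi (0:ℝ), Real.cos (x * ξ) * pp'' γ ξ| ≤ A * I0 :=
    norm_int_le hγ (by fun_prop) (fun t => abs_cos_le_one _) measurable_pp'' A hA0
      (fun ξ hξ => pp''_bound hγ hξ.le)
  set T : ℝ := ∫ ξ in Ioi (0:ℝ), Real.cos (x * ξ) * pp'' γ ξ with hTdef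
  have hx2 : (0:ℝ) < x ^ 2 := by positivity
  have hJJ : JJ γ x = (γ - T) / x ^ 2 := by
    rw [JJ, IBP1 hγ hx, IBP2 hγ hx, ← hTdef]
    field_simp
    ring
  rw [hJJ, abs_div, abs_of_pos hx2]
  have hnum : |γ - T| ≤ |γ| + (A * I0 + 1) := by
    calc |γ - T| ≤ |γ| + |T| := abs_sub _ _
      _ ≤ |γ| + (A * I0 + 1) := by linarith
  rw [div_le_div_iff₀ hx2 hx2]
  nlinarith [hnum, hx2]

lemma JJ_bounded (hγ : -2 < γ) :
    ∃ K₀ : ℝ, 0 < K₀ ∧ ∀ x : ℝ, |JJ γ x| ≤ K₀ := by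
  have hc := cc_pos hγ
  refine ⟨(cc γ)⁻¹ * I0 + 1,
    by linarith [mul_nonneg (inv_nonneg.2 hc.le) I0_nonneg], fun x => ?_⟩
  have h := norm_int_le hγ (g := fun ξ => Real.cos (x * ξ)) (by fun_prop)
    (fun t => abs_cos_le_one _) measurable_pp ((cc γ)⁻¹) (inv_nonneg.2 hc.le)
    (fun ξ hξ => pp_abs_bound hγ hξ.le)
  calc |JJ γ x| ≤ (cc γ)⁻¹ * I0 := h
    _ ≤ (cc γ)⁻¹ * I0 + 1 := by linarith

lemma measurable_JJ : Measurable (JJ γ) := by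
  have h : StronglyMeasurable (fun p : ℝ × ℝ => Real.cos (p.1 * p.2) * pp γ p.2) := by
    apply Measurable.stronglyMeasurable
    exact ((measurable_fst.mul measurable_snd).cos).mul (measurable_pp.comp measurable_snd)
  exact h.integral_prod_right'.measurable

lemma norm_exp_I_mul (x ξ : ℝ) : ‖Complex.exp (Complex.I * x * ξ)‖ = 1 := by
  rw [Complex.norm_exp]
  simp

lemma integrable_green_integrand (hγ : -2 < γ) (x : ℝ) :
    Integrable (fun ξ : ℝ =>
      Complex.exp (Complex.I * x * ξ) / Complex.ofReal (1 + ξ ^ 2 + γ * |ξ|)) := by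
  have hc := cc_pos hγ
  have hden : ∀ ξ : ℝ, (1 + ξ ^ 2 + γ * |ξ|) = uu γ |ξ| := by
    intro ξ; rw [uu, sq_abs]
  have hm1 : Measurable (fun ξ : ℝ => Complex.exp (Complex.I * x * ξ)) := by
    have : Continuous (fun ξ : ℝ => Complex.exp (Complex.I * x * ξ)) := by
      apply Complex.continuous_exp.comp; continuity
    exact this.measurable
  have hm2 : Measurable (fun ξ : ℝ => Complex.ofReal (1 + ξ ^ 2 + γ * |ξ|)) := by
    apply Complex.measurable_ofReal.comp
    fun_prop
  have hm : AEStronglyMeasurable (fun ξ : ℝ =>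
      Complex.exp (Complex.I * x * ξ) / Complex.ofReal (1 + ξ ^ 2 + γ * |ξ|)) volume :=
    (hm1.div hm2).aestronglyMeasurable
  refine Integrable.mono' ((integrable_inv_one_add_sq.const_mul ((cc γ)⁻¹))) hm ?_
  filter_upwards with ξ
  set s : ℝ := |ξ| with hs
  rw [norm_div, norm_exp_I_mul, Complex.norm_real, Real.norm_eq_abs, hden]
  have h1 : |uu γ s|⁻¹ = pp γ s := by
    rw [abs_of_pos (uu_pos hγ (abs_nonneg ξ)), pp]
  rw [one_div, h1]
  calc pp γ s ≤ (cc γ)⁻¹ * (1 + s ^ 2)⁻¹ := pp_bound hγ (abs_nonneg ξ)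
    _ = (cc γ)⁻¹ * (1 + ξ ^ 2)⁻¹ := by rw [hs, sq_abs]

lemma II_eq (hγ : -2 < γ) (x : ℝ) :
    (∫ ξ : ℝ, Complex.exp (Complex.I * x * ξ) / Complex.ofReal (1 + ξ ^ 2 + γ * |ξ|))
      = ((2 * JJ γ x : ℝ) : ℂ) := by
  set f : ℝ → ℂ := fun ξ =>
    Complex.exp (Complex.I * x * ξ) / Complex.ofReal (1 + ξ ^ 2 + γ * |ξ|) with hf
  have hfi : Integrable f := integrable_green_integrand hγ x
  have hfneg : Integrable (fun ξ => f (-ξ)) := by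
    have := hfi.comp_mul_left' (R := -1) (by norm_num)
    simpa using this
  have hsplit : (∫ ξ : ℝ, f ξ) = (∫ ξ in Iic (0:ℝ), f ξ) + ∫ ξ in Ioi (0:ℝ), f ξ := by
    rw [← integral_add_compl measurableSet_Iic hfi, compl_Iic]
  have hneg : (∫ ξ in Iic (0:ℝ), f ξ) = ∫ ξ in Ioi (0:ℝ), f (-ξ) := by
    rw [integral_comp_neg_Ioi, neg_zero]
  have hcomb : (∫ ξ in Ioi (0:ℝ), f (-ξ)) + ∫ ξ in Ioi (0:ℝ), f ξ
      = ∫ ξ in Ioi (0:ℝ), (f (-ξ) + f ξ) := by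
    rw [← integral_add hfneg.integrableOn hfi.integrableOn]
  have hpt : ∀ ξ ∈ Ioi (0:ℝ), f (-ξ) + f ξ = ((2 * (Real.cos (x * ξ) * pp γ ξ) : ℝ) : ℂ) := by
    intro ξ hξ
    have hξ' : (0:ℝ) < ξ := hξ
    have habs : |ξ| = ξ := abs_of_pos hξ'
    have habs' : |(-ξ)| = ξ := by rw [abs_neg, habs]
    have hreal1 : (1 + ξ ^ 2 + γ * |ξ| : ℝ) = uu γ ξ := by
      rw [habs]; show _ = 1 + ξ ^ 2 + γ * ξ; ring
    have hreal2 : (1 + (-ξ) ^ 2 + γ * |(-ξ)| : ℝ) = uu γ ξ := by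
      rw [habs']; show _ = 1 + ξ ^ 2 + γ * ξ; ring
    have hden : ((1 + ξ ^ 2 + γ * |ξ| : ℝ) : ℂ) = ((uu γ ξ : ℝ) : ℂ) := by rw [hreal1]
    have hdenneg : ((1 + (-ξ) ^ 2 + γ * |(-ξ)| : ℝ) : ℂ) = ((uu γ ξ : ℝ) : ℂ) := by
      rw [hreal2]
    have hune : ((uu γ ξ : ℝ) : ℂ) ≠ 0 := by
      simp only [ne_eq, Complex.ofReal_eq_zero]
      exact (uu_pos hγ hξ'.le).ne'
    have he1 : Complex.I * x * ξ = ((x * ξ : ℝ) : ℂ) * Complex.I := by push_cast; ring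
    have he2 : Complex.I * x * (-ξ : ℝ) = ((-(x * ξ) : ℝ) : ℂ) * Complex.I := by
      push_cast; ring
    rw [hf]
    simp only
    rw [hdenneg, hden, ← add_div, he1, he2, Complex.exp_mul_I, Complex.exp_mul_I]
    rw [show ((-(x * ξ) : ℝ) : ℂ) = -((x * ξ : ℝ) : ℂ) by push_cast; ring]
    rw [Complex.cos_neg, Complex.sin_neg]
    rw [← Complex.ofReal_cos]
    have hppc : ((pp γ ξ : ℝ) : ℂ) = (((uu γ ξ : ℝ) : ℂ))⁻¹ := by
      rw [show pp γ ξ = (uu γ ξ)⁻¹ from rfl, Complex.ofReal_inv]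
    rw [eq_comm]
    push_cast [hppc]
    field_simp
    ring
  have hfin : (∫ ξ in Ioi (0:ℝ), (f (-ξ) + f ξ))
      = ((2 * JJ γ x : ℝ) : ℂ) := by
    rw [setIntegral_congr_fun measurableSet_Ioi hpt]
    have h2 : (2 * JJ γ x : ℝ) = ∫ ξ in Ioi (0:ℝ), 2 * (Real.cos (x * ξ) * pp γ ξ) := by
      rw [JJ, ← integral_const_mul]
    rw [h2]
    exact integral_ofReal
  rw [hsplit, hneg, hcomb, hfin]

lemma integrable_exp_neg_abs' : Integrable (fun v : ℝ => Real.exp (-|v|)) := by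
  rw [← integrableOn_univ, ← Iic_union_Ioi (a := (0:ℝ)), integrableOn_union]
  constructor
  · refine ((integrableOn_exp_Iic 0).congr_fun (fun v hv => ?_) measurableSet_Iic)
    have : |v| = -v := abs_of_nonpos hv
    rw [this, neg_neg]
  · have base : IntegrableOn (fun v : ℝ => Real.exp (-v)) (Ioi 0) := by
      have := exp_neg_integrableOn_Ioi 0 (by norm_num : (0:ℝ) < 1)
      simpa using this
    refine base.congr_fun (fun v hv => ?_) measurableSet_Ioi
    rw [abs_of_pos hv]

lemma cos_exp_integral (b : ℝ) :
    ∫ v in Ioi (0 : ℝ), Real.exp (-v) * Real.cos (b * v) = 1 / (1 + b ^ 2) := by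
  have hb : (0:ℝ) < 1 + b ^ 2 := by positivity
  set A : ℝ → ℝ :=
    fun v => Real.exp (-v) * (b * Real.sin (b * v) - Real.cos (b * v)) / (1 + b ^ 2) with hA
  have hder : ∀ v : ℝ, HasDerivAt A (Real.exp (-v) * Real.cos (b * v)) v := by
    intro v
    have h1 : HasDerivAt (fun v : ℝ => Real.exp (-v)) (-Real.exp (-v)) v := by
      simpa using ((hasDerivAt_id v).neg).exp
    have hs : HasDerivAt (fun v : ℝ => Real.sin (b * v)) (Real.cos (b * v) * b) v := by
      simpa using ((hasDerivAt_id v).const_mul b).sin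
    have hc : HasDerivAt (fun v : ℝ => Real.cos (b * v)) (-Real.sin (b * v) * b) v := by
      simpa using ((hasDerivAt_id v).const_mul b).cos
    have h2 : HasDerivAt (fun v : ℝ => b * Real.sin (b * v) - Real.cos (b * v))
        (b * (Real.cos (b * v) * b) - -Real.sin (b * v) * b) v := (hs.const_mul b).sub hc
    have h3 := (h1.mul h2).div_const (1 + b ^ 2)
    refine h3.congr_deriv ?_
    field_simp
    ring
  have hcont : ContinuousWithinAt A (Ici 0) 0 := (hder 0).continuousAt.continuousWithinAt
  have hexp : IntegrableOn (fun v : ℝ => Real.exp (-v)) (Ioi 0) := by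
    have := exp_neg_integrableOn_Ioi 0 (by norm_num : (0:ℝ) < 1)
    simpa using this
  have hint : IntegrableOn (fun v : ℝ => Real.exp (-v) * Real.cos (b * v)) (Ioi 0) := by
    refine Integrable.mono' hexp ?_ ?_
    · exact ((Real.continuous_exp.comp continuous_neg).mul
        (Real.continuous_cos.comp (continuous_const.mul continuous_id))).aestronglyMeasurable
    · filter_upwards with v
      rw [Real.norm_eq_abs, abs_mul, Real.abs_exp]
      calc Real.exp (-v) * |Real.cos (b * v)| ≤ Real.exp (-v) * 1 :=
            mul_le_mul_of_nonneg_left (abs_cos_le_one _) (Real.exp_pos _).le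
        _ = Real.exp (-v) := mul_one _
  have htend : Tendsto A atTop (𝓝 0) := by
    have hb0 : Tendsto (fun v : ℝ => (|b| + 1) / (1 + b ^ 2) * Real.exp (-v)) atTop (𝓝 0) := by
      have h0 : Tendsto (fun v : ℝ => Real.exp (-v)) atTop (𝓝 0) :=
        Real.tendsto_exp_atBot.comp tendsto_neg_atTop_atBot
      simpa using h0.const_mul ((|b| + 1) / (1 + b ^ 2))
    refine squeeze_zero_norm' ?_ hb0
    filter_upwards with v
    have hbd : |b * Real.sin (b * v) - Real.cos (b * v)| ≤ |b| + 1 := by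
      calc |b * Real.sin (b * v) - Real.cos (b * v)|
          ≤ |b * Real.sin (b * v)| + |Real.cos (b * v)| := abs_sub _ _
        _ ≤ |b| * 1 + 1 := by
            rw [abs_mul]
            exact add_le_add (mul_le_mul_of_nonneg_left (abs_sin_le_one _) (abs_nonneg b))
              (abs_cos_le_one _)
        _ = |b| + 1 := by ring
    have : ‖A v‖ = Real.exp (-v) * |b * Real.sin (b * v) - Real.cos (b * v)| / (1 + b ^ 2) := by
      simp only [hA, Real.norm_eq_abs, abs_div, abs_mul, Real.abs_exp, abs_of_pos hb]
    rw [this]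
    rw [div_le_iff₀ hb]
    calc Real.exp (-v) * |b * Real.sin (b * v) - Real.cos (b * v)|
        ≤ Real.exp (-v) * (|b| + 1) :=
          mul_le_mul_of_nonneg_left hbd (Real.exp_pos _).le
      _ = (|b| + 1) / (1 + b ^ 2) * Real.exp (-v) * (1 + b ^ 2) := by
          field_simp
  have hFTC := integral_Ioi_of_hasDerivAt_of_tendsto hcont (fun v _ => hder v) hint htend
  have hA0 : A 0 = -(1 / (1 + b ^ 2)) := by
    show Real.exp (-0) * (b * Real.sin (b * 0) - Real.cos (b * 0)) / (1 + b ^ 2) = _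
    norm_num
    rw [neg_div, one_div]
  rw [hA0] at hFTC
  rw [hFTC]
  ring

lemma norm_ofReal_mul_I_exp (t : ℝ) : ‖Complex.exp ((t : ℂ) * Complex.I)‖ = 1 := by
  rw [Complex.norm_exp]
  simp

lemma fourier_exp_abs (w : ℝ) :
    𝓕 (fun v : ℝ => (Real.exp (-|v|) : ℂ)) w = ((2 / (1 + (2 * π * w) ^ 2) : ℝ) : ℂ) := by
  rw [Real.fourier_eq']
  have hip : ∀ v : ℝ, (inner ℝ v w : ℝ) = v * w := fun v => by
    simp [RCLike.inner_apply, starRingEnd_apply, mul_comm]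
  have hgeq : (fun v : ℝ => Complex.exp (((-2 * π * (inner ℝ v w : ℝ) : ℝ) : ℂ) * Complex.I)
        • ((Real.exp (-|v|) : ℝ) : ℂ))
      = fun v : ℝ => Complex.exp (((-2 * π * (v * w) : ℝ) : ℂ) * Complex.I)
        * ((Real.exp (-|v|) : ℝ) : ℂ) := by
    funext v
    rw [hip v, smul_eq_mul]
  rw [show (fun v : ℝ => Complex.exp (↑(-2 * π * (inner ℝ v w : ℝ)) * Complex.I)
        • ((Real.exp (-|v|) : ℝ) : ℂ)) = _ from hgeq]
  set g : ℝ → ℂ := fun v : ℝ => Complex.exp (((-2 * π * (v * w) : ℝ) : ℂ) * Complex.I)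
    * ((Real.exp (-|v|) : ℝ) : ℂ) with hg
  have hgi : Integrable g := by
    have hm : AEStronglyMeasurable g volume := by
      apply Continuous.aestronglyMeasurable
      apply Continuous.mul
      · exact Complex.continuous_exp.comp (by continuity)
      · exact Complex.continuous_ofReal.comp (Real.continuous_exp.comp continuous_abs.neg)
    refine Integrable.mono' integrable_exp_neg_abs' hm ?_
    filter_upwards with v
    rw [hg]
    simp only
    rw [norm_mul, norm_ofReal_mul_I_exp, one_mul, Complex.norm_real, Real.norm_eq_abs,
      Real.abs_exp]
  have hgneg : Integrable (fun v => g (-v)) := by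
    have := hgi.comp_mul_left' (R := -1) (by norm_num)
    simpa using this
  have hsplit : (∫ v : ℝ, g v) = (∫ v in Iic (0:ℝ), g v) + ∫ v in Ioi (0:ℝ), g v := by
    rw [← integral_add_compl measurableSet_Iic hgi, compl_Iic]
  have hneg : (∫ v in Iic (0:ℝ), g v) = ∫ v in Ioi (0:ℝ), g (-v) := by
    rw [integral_comp_neg_Ioi, neg_zero]
  have hcomb : (∫ v in Ioi (0:ℝ), g (-v)) + ∫ v in Ioi (0:ℝ), g v
      = ∫ v in Ioi (0:ℝ), (g (-v) + g v) := by
    rw [← integral_add hgneg.integrableOn hgi.integrableOn]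
  have hpt : ∀ v ∈ Ioi (0:ℝ), g (-v) + g v
      = ((2 * (Real.exp (-v) * Real.cos (2 * π * w * v)) : ℝ) : ℂ) := by
    intro v hv
    have hv' : (0:ℝ) < v := hv
    have habs : |v| = v := abs_of_pos hv'
    have habs' : |(-v)| = v := by rw [abs_neg, habs]
    rw [hg]
    simp only
    rw [habs, habs']
    rw [show ((-2 * π * (-v * w) : ℝ) : ℂ) = ((2 * π * w * v : ℝ) : ℂ) by push_cast; ring]
    rw [show ((-2 * π * (v * w) : ℝ) : ℂ) = -((2 * π * w * v : ℝ) : ℂ) by push_cast; ring]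
    rw [show (-(((2 * π * w * v : ℝ)) : ℂ)) * Complex.I
        = (((-(2 * π * w * v) : ℝ)) : ℂ) * Complex.I by push_cast; ring]
    rw [Complex.exp_mul_I, Complex.exp_mul_I]
    rw [show ((-(2 * π * w * v) : ℝ) : ℂ) = -(((2 * π * w * v : ℝ)) : ℂ) by push_cast; ring]
    rw [Complex.cos_neg, Complex.sin_neg, ← Complex.ofReal_cos]
    rw [show (-v : ℝ) = -v from rfl]
    push_cast
    ring
  have hIoi : (∫ v in Ioi (0:ℝ), (g (-v) + g v))
      = ((2 * (1 / (1 + (2 * π * w) ^ 2)) : ℝ) : ℂ) := by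
    rw [setIntegral_congr_fun measurableSet_Ioi hpt]
    have h2 : (2 * (1 / (1 + (2 * π * w) ^ 2)) : ℝ)
        = ∫ v in Ioi (0:ℝ), 2 * (Real.exp (-v) * Real.cos (2 * π * w * v)) := by
      rw [← cos_exp_integral (2 * π * w), ← integral_const_mul]
    rw [h2]
    exact integral_ofReal
  rw [hsplit, hneg, hcomb, hIoi]
  push_cast
  ring

lemma integral_exp_I_inv_one_add_sq (x : ℝ) :
    (∫ ξ : ℝ, Complex.exp (Complex.I * x * ξ) / Complex.ofReal (1 + ξ ^ 2))
      = ((π * Real.exp (-|x|) : ℝ) : ℂ) := by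
  set f : ℝ → ℂ := fun v => ((Real.exp (-|v|) : ℝ) : ℂ) with hf
  have hcont : Continuous f :=
    Complex.continuous_ofReal.comp (Real.continuous_exp.comp continuous_abs.neg)
  have hfi : Integrable f := integrable_exp_neg_abs'.ofReal
  have hFf : 𝓕 f = fun w : ℝ => ((2 / (1 + (2 * π * w) ^ 2) : ℝ) : ℂ) :=
    funext (fun w => fourier_exp_abs w)
  have hFfi : Integrable (𝓕 f) := by
    rw [hFf]
    refine Integrable.mono' (integrable_inv_one_add_sq.const_mul 2) ?_ ?_
    · have hcden : Continuous (fun w : ℝ => 2 / (1 + (2 * π * w) ^ 2)) := by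
        apply Continuous.div continuous_const
        · continuity
        · intro w; positivity
      exact (Complex.continuous_ofReal.comp hcden).aestronglyMeasurable
    · filter_upwards with w
      rw [Complex.norm_real, Real.norm_eq_abs]
      have h1 : (0:ℝ) < 1 + (2 * π * w) ^ 2 := by positivity
      have hpi2 : (1:ℝ) ≤ 4 * π ^ 2 := by nlinarith [Real.pi_gt_three]
      have h2 : (1:ℝ) + w ^ 2 ≤ 1 + (2 * π * w) ^ 2 := by
        nlinarith [mul_le_mul_of_nonneg_right hpi2 (sq_nonneg w)]
      have h3 : (0:ℝ) < 1 + w ^ 2 := by positivity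
      rw [abs_of_pos (by positivity)]
      calc (2:ℝ) / (1 + (2 * π * w) ^ 2) ≤ 2 / (1 + w ^ 2) :=
            div_le_div_of_nonneg_left (by norm_num) h3 h2
        _ = 2 * (1 + w ^ 2)⁻¹ := by rw [div_eq_mul_inv]
  have hinv := hcont.fourierInv_fourier_eq hfi hFfi
  have hx := congrFun hinv x
  rw [hFf, Real.fourierInv_eq'] at hx
  have hip : ∀ w : ℝ, (inner ℝ w x : ℝ) = w * x := fun w => by
    simp [RCLike.inner_apply, starRingEnd_apply, mul_comm]
  set Gg : ℝ → ℂ := fun ξ => Complex.exp (Complex.I * x * ξ) * ((2 / (1 + ξ ^ 2) : ℝ) : ℂ)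
    with hGg
  have hcomp : (fun w : ℝ => Complex.exp (((2 * π * (inner ℝ w x : ℝ) : ℝ) : ℂ) * Complex.I)
      • ((2 / (1 + (2 * π * w) ^ 2) : ℝ) : ℂ)) = fun w => Gg (2 * π * w) := by
    funext w
    rw [hip w, smul_eq_mul, hGg]
    simp only
    congr 1
    rw [show ((2 * π * (w * x) : ℝ) : ℂ) * Complex.I
        = Complex.I * x * ((2 * π * w : ℝ) : ℂ) by push_cast; ring]
  rw [hcomp] at hx
  rw [Measure.integral_comp_mul_left Gg (2 * π)] at hx
  have h2pi : |(2 * π)⁻¹| = (2 * π)⁻¹ := abs_of_pos (by positivity)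
  rw [h2pi] at hx
  have hGgint : (∫ ξ : ℝ, Gg ξ)
      = 2 * ∫ ξ : ℝ, Complex.exp (Complex.I * x * ξ) / Complex.ofReal (1 + ξ ^ 2) := by
    rw [← integral_const_mul]
    apply integral_congr_ae
    filter_upwards with ξ
    rw [hGg]
    simp only
    have hne : ((1 + ξ ^ 2 : ℝ) : ℂ) ≠ 0 := by
      simp only [ne_eq, Complex.ofReal_eq_zero]
      positivity
    push_cast
    field_simp
  rw [hGgint] at hx
  simp only [hf] at hx
  set T : ℂ := ∫ ξ : ℝ, Complex.exp (Complex.I * x * ξ) / Complex.ofReal (1 + ξ ^ 2) with hT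
  have hπc : (π : ℂ) ≠ 0 := Complex.ofReal_ne_zero.2 Real.pi_ne_zero
  have hx'' : (((2 * π)⁻¹ : ℝ) : ℂ) * ((2:ℂ) * T) = ((Real.exp (-|x|) : ℝ) : ℂ) := by
    rw [← Complex.real_smul]
    exact hx
  calc T = (((2 * π : ℝ) : ℂ) / 2) * ((((2 * π)⁻¹ : ℝ) : ℂ) * ((2:ℂ) * T)) := by
        push_cast
        field_simp
      _ = (((2 * π : ℝ) : ℂ) / 2) * ((Real.exp (-|x|) : ℝ) : ℂ) := by rw [hx'']
      _ = ((π * Real.exp (-|x|) : ℝ) : ℂ) := by push_cast; ring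

end AuxG

section Final

variable {γ : ℝ}

lemma greenG_norm (hγ : -2 < γ) (x : ℝ) :
    ‖GreenG γ x‖ = (Real.sqrt (2 * π))⁻¹ * |JJ γ x| := by
  have hs : (0:ℝ) < Real.sqrt (2 * π) := Real.sqrt_pos.2 (by positivity)
  set t : ℝ := Real.sqrt (2 * π) with ht
  rw [GreenG, II_eq hγ x, norm_mul, Complex.norm_real, Real.norm_eq_abs]
  have hc : ‖(1 / (2 * (t : ℂ)))‖ = 1 / (2 * t) := by
    rw [norm_div, norm_one, norm_mul, Complex.norm_real, Real.norm_eq_abs, abs_of_pos hs,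
      show ‖(2:ℂ)‖ = 2 from by norm_num]
  rw [hc, abs_mul, show |(2:ℝ)| = 2 by norm_num]
  field_simp

lemma greenG_aesm (hγ : -2 < γ) : AEStronglyMeasurable (GreenG γ) volume := by
  have hfun : GreenG γ = fun x =>
      (1 / (2 * Real.sqrt (2 * Real.pi)) : ℂ) * ((2 * JJ γ x : ℝ) : ℂ) :=
    funext fun x => by rw [GreenG, II_eq hγ x]
  rw [hfun]
  exact ((Complex.measurable_ofReal.comp (measurable_JJ.const_mul 2)).const_mul
    _).aestronglyMeasurable

/-- Decay of the Green function: for `γ > -2` there are `C₁, C₂, θ > 0` with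
`|G(x)| ≤ C₁|γ|/x² + C₂ e^{-θ|x|/2}` for `|x| ≥ 1`; in particular `G ∈ L¹(ℝ)`
and `x²G(x)` is bounded. -/
theorem stmt19 (γ : ℝ) (hγ : -2 < γ) :
    ∃ C₁ C₂ θ : ℝ, 0 < C₁ ∧ 0 < C₂ ∧ 0 < θ ∧
      (∀ x : ℝ, 1 ≤ |x| →
        ‖GreenG γ x‖ ≤ C₁ * |γ| / x ^ 2 + C₂ * Real.exp (-θ * |x| / 2)) ∧
      Integrable (GreenG γ) (volume : Measure ℝ) ∧
      ∃ M : ℝ, ∀ x : ℝ, x ^ 2 * ‖GreenG γ x‖ ≤ M := by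
  have hs : (0:ℝ) < Real.sqrt (2 * π) := Real.sqrt_pos.2 (by positivity)
  set s : ℝ := Real.sqrt (2 * π) with hsdef
  have hnorm : ∀ x : ℝ, ‖GreenG γ x‖ = s⁻¹ * |JJ γ x| := greenG_norm hγ
  by_cases hγ0 : γ = 0
  · -- exponential case
    subst hγ0
    have hJJ0 : ∀ x : ℝ, JJ 0 x = π * Real.exp (-|x|) / 2 := by
      intro x
      have h1 := II_eq hγ x
      rw [show (fun ξ : ℝ => Complex.exp (Complex.I * x * ξ)
            / Complex.ofReal (1 + ξ ^ 2 + 0 * |ξ|))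
          = fun ξ : ℝ => Complex.exp (Complex.I * x * ξ) / Complex.ofReal (1 + ξ ^ 2) from
        funext fun ξ => by norm_num] at h1
      have h2 := integral_exp_I_inv_one_add_sq x
      have h3 : ((2 * JJ 0 x : ℝ) : ℂ) = ((π * Real.exp (-|x|) : ℝ) : ℂ) := h1.symm.trans h2
      have h4 : 2 * JJ 0 x = π * Real.exp (-|x|) := Complex.ofReal_inj.1 h3
      linarith
    set C' : ℝ := s⁻¹ * (π / 2) with hC'
    have hC'pos : 0 < C' := by positivity
    have hval : ∀ x : ℝ, ‖GreenG 0 x‖ = C' * Real.exp (-|x|) := by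
      intro x
      rw [hnorm x, hJJ0 x, abs_of_nonneg (by positivity)]
      ring
    refine ⟨1, C', 1, one_pos, hC'pos, one_pos, ?_, ?_, ?_⟩
    · intro x hx
      rw [hval x, show (1:ℝ) * |(0:ℝ)| / x ^ 2 = 0 by simp, zero_add]
      have hle : Real.exp (-|x|) ≤ Real.exp (-1 * |x| / 2) :=
        Real.exp_le_exp.2 (by nlinarith [abs_nonneg x])
      exact mul_le_mul_of_nonneg_left hle hC'pos.le
    · refine Integrable.mono' ((integrable_exp_neg_abs').const_mul C') (greenG_aesm hγ) ?_
      filter_upwards with x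
      exact (hval x).le
    · refine ⟨4 * C', fun x => ?_⟩
      rw [hval x]
      have ht : (0:ℝ) ≤ |x| := abs_nonneg x
      have h1 : |x| / 2 + 1 ≤ Real.exp (|x| / 2) := Real.add_one_le_exp _
      have h3 : Real.exp |x| = Real.exp (|x| / 2) * Real.exp (|x| / 2) := by
        rw [← Real.exp_add]; ring_nf
      have h4 : x ^ 2 = |x| ^ 2 := (sq_abs x).symm
      have key : x ^ 2 ≤ 4 * Real.exp |x| := by
        nlinarith [Real.exp_pos (|x| / 2)]
      have h2 : Real.exp (-|x|) * Real.exp |x| = 1 := by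
        rw [← Real.exp_add]; simp
      have h6 : x ^ 2 * Real.exp (-|x|) ≤ 4 := by
        have h5 := mul_le_mul_of_nonneg_right key (Real.exp_pos (-|x|)).le
        nlinarith [h5, h2]
      calc x ^ 2 * (C' * Real.exp (-|x|)) = (x ^ 2 * Real.exp (-|x|)) * C' := by ring
        _ ≤ 4 * C' := mul_le_mul_of_nonneg_right h6 hC'pos.le
  · -- power decay case
    have hγabs : 0 < |γ| := abs_pos.2 hγ0
    obtain ⟨K, hK, hKb⟩ := JJ_decay hγ
    obtain ⟨K₀, hK₀, hK₀b⟩ := JJ_bounded hγ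
    set B : ℝ := 2 * s⁻¹ * (K₀ + |γ| + K) with hB
    have hBpos : 0 < B := by positivity
    have hbound : ∀ x : ℝ, ‖GreenG γ x‖ ≤ B * (1 + x ^ 2)⁻¹ := by
      intro x
      rcases le_or_gt (|x|) 1 with hx | hx
      · have hx2 : x ^ 2 ≤ 1 := by
          rw [← sq_abs]; nlinarith [abs_nonneg x]
        have h1 : ‖GreenG γ x‖ ≤ s⁻¹ * K₀ := by
          rw [hnorm x]
          exact mul_le_mul_of_nonneg_left (hK₀b x) (inv_nonneg.2 hs.le)
        have h2 : (2:ℝ)⁻¹ ≤ (1 + x ^ 2)⁻¹ := by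
          apply inv_anti₀ (by positivity)
          linarith
        calc ‖GreenG γ x‖ ≤ s⁻¹ * K₀ := h1
          _ ≤ B * 2⁻¹ := by
              rw [hB]
              have : 2 * s⁻¹ * (K₀ + |γ| + K) * 2⁻¹ = s⁻¹ * (K₀ + |γ| + K) := by ring
              rw [this]
              have : s⁻¹ * K₀ ≤ s⁻¹ * (K₀ + |γ| + K) := by
                apply mul_le_mul_of_nonneg_left _ (inv_nonneg.2 hs.le)
                linarith
              exact this
          _ ≤ B * (1 + x ^ 2)⁻¹ := mul_le_mul_of_nonneg_left h2 hBpos.le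
      · have hx0 : x ≠ 0 := by
          intro h; rw [h, abs_zero] at hx; norm_num at hx
        have hx2 : (1:ℝ) ≤ x ^ 2 := by
          rw [← sq_abs]; nlinarith
        have hx2pos : (0:ℝ) < x ^ 2 := by positivity
        have h1 : ‖GreenG γ x‖ ≤ s⁻¹ * ((|γ| + K) / x ^ 2) := by
          rw [hnorm x]
          exact mul_le_mul_of_nonneg_left (hKb x hx0) (inv_nonneg.2 hs.le)
        have h2 : (1 + x ^ 2 : ℝ)⁻¹ ≥ (2 * x ^ 2)⁻¹ := by
          apply inv_anti₀ (by positivity)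
          linarith
        calc ‖GreenG γ x‖ ≤ s⁻¹ * ((|γ| + K) / x ^ 2) := h1
          _ ≤ B * (2 * x ^ 2)⁻¹ := by
              rw [hB]
              rw [show (2 * s⁻¹ * (K₀ + |γ| + K)) * (2 * x ^ 2)⁻¹
                  = s⁻¹ * ((K₀ + |γ| + K) / x ^ 2) by field_simp]
              apply mul_le_mul_of_nonneg_left _ (inv_nonneg.2 hs.le)
              apply div_le_div_of_nonneg_right _ hx2pos.le
              linarith
          _ ≤ B * (1 + x ^ 2)⁻¹ := mul_le_mul_of_nonneg_left h2 hBpos.le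
    refine ⟨(|γ| + K) / (s * |γ|), 1, 1, by positivity, one_pos, one_pos, ?_, ?_, ?_⟩
    · intro x hx
      have hx0 : x ≠ 0 := by
        intro h; rw [h, abs_zero] at hx; norm_num at hx
      have h1 : ‖GreenG γ x‖ ≤ s⁻¹ * ((|γ| + K) / x ^ 2) := by
        rw [hnorm x]
        exact mul_le_mul_of_nonneg_left (hKb x hx0) (inv_nonneg.2 hs.le)
      have h2 : s⁻¹ * ((|γ| + K) / x ^ 2) = (|γ| + K) / (s * |γ|) * |γ| / x ^ 2 := by
        field_simp
      refine (h1.trans_eq h2).trans (le_add_of_nonneg_right (by positivity))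
    · refine Integrable.mono' ((integrable_inv_one_add_sq.const_mul B)) (greenG_aesm hγ) ?_
      filter_upwards with x
      exact hbound x
    · refine ⟨s⁻¹ * (K₀ + |γ| + K), fun x => ?_⟩
      rcases le_or_gt (|x|) 1 with hx | hx
      · have hx2 : x ^ 2 ≤ 1 := by
          rw [← sq_abs]; nlinarith [abs_nonneg x]
        have h1 : ‖GreenG γ x‖ ≤ s⁻¹ * K₀ := by
          rw [hnorm x]
          exact mul_le_mul_of_nonneg_left (hK₀b x) (inv_nonneg.2 hs.le)
        calc x ^ 2 * ‖GreenG γ x‖ ≤ 1 * ‖GreenG γ x‖ :=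
              mul_le_mul_of_nonneg_right hx2 (norm_nonneg _)
          _ = ‖GreenG γ x‖ := one_mul _
          _ ≤ s⁻¹ * K₀ := h1
          _ ≤ s⁻¹ * (K₀ + |γ| + K) := by
              apply mul_le_mul_of_nonneg_left _ (inv_nonneg.2 hs.le)
              linarith
      · have hx0 : x ≠ 0 := by
          intro h; rw [h, abs_zero] at hx; norm_num at hx
        have hx2pos : (0:ℝ) < x ^ 2 := by positivity
        have h1 : ‖GreenG γ x‖ ≤ s⁻¹ * ((|γ| + K) / x ^ 2) := by
          rw [hnorm x]
          exact mul_le_mul_of_nonneg_left (hKb x hx0) (inv_nonneg.2 hs.le)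
        calc x ^ 2 * ‖GreenG γ x‖ ≤ x ^ 2 * (s⁻¹ * ((|γ| + K) / x ^ 2)) :=
              mul_le_mul_of_nonneg_left h1 hx2pos.le
          _ = s⁻¹ * (|γ| + K) := by field_simp
          _ ≤ s⁻¹ * (K₀ + |γ| + K) := by
              apply mul_le_mul_of_nonneg_left _ (inv_nonneg.2 hs.le)
              linarith

end Final
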